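/- Given a maximum (V1–V2)-linking L in a finite directed graph that does not cover node v ∈ V1, and given a direct (V1–V2)-path P starting at v, one can construct a (V1–V2)-linking of the same size as L that covers v: letting x be the first node of P lying on some path of L, replace in that path of L the segment from its start to x by the segment of P from v to x. -/

import Mathlib

/-- A direct (A–T)-path: a nonempty simple directed path whose first node is in `A`,
whose last node is in `T`, and which meets `A` only at its first node and `T` only
at its last node. -/
def DirectPath {V : Type} (E : V → V → Prop) (A T : Set V) (l : List V) : Prop :=
  l ≠ [] ∧ l.Chain' E ∧ l.Nodup ∧
  (∃ a ∈ A, l.head? = some a) ∧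
  (∃ b ∈ T, l.getLast? = some b) ∧
  (∀ v ∈ l, v ∈ A → l.head? = some v) ∧
  (∀ v ∈ l, v ∈ T → l.getLast? = some v)

/-- An (A–T)-linking of size `p`: `p` pairwise vertex-disjoint direct (A–T)-paths. -/
def Linking {V : Type} (E : V → V → Prop) (A T : Set V) (p : ℕ)
    (P : Fin p → List V) : Prop :=
  (∀ i, DirectPath E A T (P i)) ∧
  ∀ i j, i ≠ j → ∀ v, v ∈ P i → v ∉ P j

/-- An (A,T)-separator: a node set met by every directed path from `A` to `T`. -/
def IsSeparator {V : Type} (E : V → V → Prop) (A T S : Set V) : Prop :=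
  ∀ l : List V, l ≠ [] → l.Chain' E →
    (∃ a ∈ A, l.head? = some a) → (∃ b ∈ T, l.getLast? = some b) →
    ∃ v ∈ l, v ∈ S

/-!
If `P0` avoided every path of `L`, adding it to `L` would give a larger linking; so `P0` meets
`L`, first at some node `x` on a path `L i`. The part of `P0` before `x` avoids `L`, so
replacing the part of `L i` before `x` by it gives a direct path still disjoint from the other
paths of `L`. The new path meets `A` only at `v`: the tail of `L i` from `x` on avoids `A`
because `L i` is simple and meets `A` only at its start, unless that start is `x` itself, which
is impossible since `P0` meets `A` only at `v`.
-/

theorem List.exists_eq_append_cons_of_exists_mem {α : Type*} (q : α → Prop) {l : List α}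
    (h : ∃ a ∈ l, q a) : ∃ t x rest, l = t ++ x :: rest ∧ q x ∧ ∀ u ∈ t, ¬ q u := by
  classical
  obtain ⟨x, hx⟩ := Option.isSome_iff_exists.mp
    (List.find?_isSome (p := fun a => decide (q a)).mpr (by simpa using h))
  obtain ⟨hqx, t, rest, rfl, ht⟩ := List.find?_eq_some_iff_append.mp hx
  exact ⟨t, x, rest, rfl, by simpa using hqx, fun u hu => by simpa using ht u hu⟩

theorem List.Nodup.eq_nil_of_head?_mem_right {α : Type*} {l₁ l₂ : List α} {u : α}
    (hnd : (l₁ ++ l₂).Nodup) (hh : (l₁ ++ l₂).head? = some u) (hu : u ∈ l₂) : l₁ = [] := by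
  cases l₁ with
  | nil => rfl
  | cons a l₁ =>
    obtain rfl : a = u := by simpa using hh
    exact absurd rfl ((List.nodup_append.mp hnd).2.2 a List.mem_cons_self a hu)

theorem List.Nodup.eq_nil_of_getLast?_mem_left {α : Type*} {l₁ l₂ : List α} {u : α}
    (hnd : (l₁ ++ l₂).Nodup) (hh : (l₁ ++ l₂).getLast? = some u) (hu : u ∈ l₁) : l₂ = [] := by
  by_contra hne
  rw [List.getLast?_append_of_ne_nil _ hne] at hh
  exact (List.nodup_append.mp hnd).2.2 u hu u (List.mem_of_getLast? hh) rfl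

theorem List.IsChain.append_cons_splice {α : Type*} {R : α → α → Prop}
    {t rest pre suf : List α} {x : α} (h₁ : (t ++ x :: rest).IsChain R)
    (h₂ : (pre ++ x :: suf).IsChain R) : (t ++ x :: suf).IsChain R :=
  let ⟨ht, _, hlink⟩ := List.isChain_append.mp h₁
  ht.append h₂.right_of_append hlink

section

variable {V : Type} {E : V → V → Prop} {A T : Set V}

theorem DirectPath.splice {t rest pre suf : List V} {x : V}
    (hP : DirectPath E A T (t ++ x :: rest)) (hQ : DirectPath E A T (pre ++ x :: suf))
    (ht : t ≠ []) (hdisj : ∀ u ∈ t, u ∉ x :: suf) : DirectPath E A T (t ++ x :: suf) := by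
  obtain ⟨-, hPch, hPnd, ⟨a, haA, hPa⟩, -, hPA, hPT⟩ := hP
  obtain ⟨-, hQch, hQnd, -, ⟨b, hbT, hQb⟩, hQA, hQT⟩ := hQ
  have hhead : ∀ l : List V, (t ++ l).head? = t.head? := fun l => List.head?_append_of_ne_nil _ ht
  have hlast : (t ++ x :: suf).getLast? = (pre ++ x :: suf).getLast? := by
    simp only [List.getLast?_append_cons]
  have hxA : x ∉ A := fun hxA => by
    have hx : t.head? = some x := hhead _ ▸ hPA x (by simp) hxA
    exact hdisj x (List.mem_of_mem_head? hx) List.mem_cons_self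
  refine ⟨by simp [ht], hPch.append_cons_splice hQch, ?_, ⟨a, haA, by rwa [hhead, ← hhead]⟩,
    ⟨b, hbT, hlast ▸ hQb⟩, ?_, ?_⟩
  · exact List.nodup_append.mpr ⟨(List.nodup_append.mp hPnd).1, (List.nodup_append.mp hQnd).2.1,
      fun u hu w hw huw => hdisj u hu (huw ▸ hw)⟩
  · intro u hu huA
    rcases List.mem_append.mp hu with hut | husuf
    · rw [hhead, ← hhead]
      exact hPA u (List.mem_append_left _ hut) huA
    · have hu := hQA u (List.mem_append_right _ husuf) huA
      obtain rfl := hQnd.eq_nil_of_head?_mem_right hu husuf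
      obtain rfl : x = u := by simpa using hu
      exact absurd huA hxA
  · intro u hu huT
    rcases List.mem_append.mp hu with hut | husuf
    · exact absurd (hPnd.eq_nil_of_getLast?_mem_left (hPT u (List.mem_append_left _ hut) huT) hut)
        (List.cons_ne_nil _ _)
    · exact hlast ▸ hQT u (List.mem_append_right _ husuf) huT

variable {p : ℕ} {L : Fin p → List V}

theorem Linking.cons (hL : Linking E A T p L) {P : List V} (hP : DirectPath E A T P)
    (hdisj : ∀ u ∈ P, ∀ i, u ∉ L i) : Linking E A T (p + 1) (Fin.cons P L) := by
  refine ⟨Fin.cases hP hL.1, fun i j hij u => ?_⟩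
  cases i using Fin.cases <;> cases j using Fin.cases
  · exact absurd rfl hij
  · simpa using fun hu => hdisj u hu _
  · simpa using fun hu hP => hdisj u hP _ hu
  · simpa using hL.2 _ _ (fun h => hij (congrArg Fin.succ h)) u

theorem Linking.update (hL : Linking E A T p L) (i : Fin p) {N : List V}
    (hN : DirectPath E A T N) (hsub : ∀ u ∈ N, u ∈ L i ∨ ∀ j, u ∉ L j) :
    Linking E A T p (Function.update L i N) := by
  have hN_disj : ∀ j ≠ i, ∀ u ∈ N, u ∉ L j := fun j hj u hu =>
    (hsub u hu).elim (hL.2 i j hj.symm u) (· j)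
  refine ⟨fun j => ?_, fun j k hjk u => ?_⟩
  · rcases eq_or_ne j i with rfl | hj
    · simpa using hN
    · simpa [hj] using hL.1 j
  · by_cases hj : j = i <;> by_cases hk : k = i
    · exact absurd (hj.trans hk.symm) hjk
    · subst hj
      simpa [hk] using hN_disj k hk u
    · subst hk
      simpa [hj] using fun hu hN => hN_disj j hj u hN hu
    · simpa [hj, hk] using hL.2 j k hjk u

end

theorem exists_same_size_linking_covering_general {V : Type}
    (E : V → V → Prop) (A T : Set V)
    (p : ℕ) (L : Fin p → List V) (hL : Linking E A T p L)
    (hmax : ∀ q (Q : Fin q → List V), Linking E A T q Q → q ≤ p)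
    (v : V) (hvnot : ∀ i, v ∉ L i)
    (P0 : List V) (hP0 : DirectPath E A T P0) (hstart : P0.head? = some v) :
    ∃ Q : Fin p → List V, Linking E A T p Q ∧ ∃ i, v ∈ Q i := by
  have hmeet : ∃ u ∈ P0, ∃ i, u ∈ L i := by
    by_contra! hmiss
    have := hmax _ _ (hL.cons hP0 hmiss)
    omega
  obtain ⟨t, x, rest, rfl, ⟨i, hxi⟩, ht⟩ := List.exists_eq_append_cons_of_exists_mem _ hmeet
  push Not at ht
  obtain ⟨pre, suf, hLi⟩ := List.append_of_mem hxi
  have hvt : v ∈ t := by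
    cases t with
    | nil => exact absurd ((by simpa using hstart : x = v) ▸ hxi) (hvnot i)
    | cons a t =>
      obtain rfl : a = v := by simpa using hstart
      exact List.mem_cons_self
  have hsuf : ∀ u ∈ x :: suf, u ∈ L i := fun u hu => hLi ▸ List.mem_append_right _ hu
  refine ⟨Function.update L i (t ++ x :: suf), hL.update i ?_ ?_, i, by simp [hvt]⟩
  · exact hP0.splice (hLi ▸ hL.1 i) (List.ne_nil_of_mem hvt) fun u hu h => ht u hu i (hsuf u h)
  · intro u hu
    rcases List.mem_append.mp hu with hut | husuf
    · exact Or.inr (ht u hut)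
    · exact Or.inl (hsuf u husuf)

/-- Rerouting: given a maximum (A–T)-linking `L` not covering `v ∈ A` and a direct
(A–T)-path starting at `v`, there is an (A–T)-linking of the same size covering `v`. -/
theorem exists_same_size_linking_covering {V : Type} [Fintype V] [DecidableEq V]
    (E : V → V → Prop) (A T : Set V)
    (p : ℕ) (L : Fin p → List V) (hL : Linking E A T p L)
    (hmax : ∀ q (Q : Fin q → List V), Linking E A T q Q → q ≤ p)
    (v : V) (hv : v ∈ A) (hvnot : ∀ i, v ∉ L i)
    (P0 : List V) (hP0 : DirectPath E A T P0) (hstart : P0.head? = some v) :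
    ∃ Q : Fin p → List V, Linking E A T p Q ∧ ∃ i, v ∈ Q i :=
  exists_same_size_linking_covering_general E A T p L hL hmax v hvnot P0 hP0 hstart
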